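/- arXiv:1801.09516 — 2 statements merged into one kernel-verified Lean document; each statement's English description precedes it below -/
import Mathlib

section
/- For positive integers n ≥ 1 and 0 ≤ d ≤ n, the number of binary Lyndon words of length n and density d equals (1/n) · Σ_{j | gcd(n,d)} μ(j) · C(n/j, d/j), where μ is the Möbius function. -/
/-!
Every binary word of length `n` and density `d` is, in exactly one way, the `j`-th power of a
primitive word, with `j ∣ gcd n d`; hence `C(n, d) = ∑_{j ∣ gcd n d} P(n/j, d/j)`, where `P(m, e)`
counts primitive words. The `m` rotations of a primitive word of length `m` are pairwise distinct
and exactly one of them, the lexicographically least, is a Lyndon word, so `P(m, e) = m L(m, e)`.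
Writing `(n, d) = g (a, b)` with `a, b` coprime, Möbius inversion in `g` gives the formula.
-/

/-- `w` is a necklace: lexicographically ≤ all of its rotations. -/
def IsNecklace (w : List ℕ) : Prop := ∀ i : ℕ, w ≤ w.rotate i

/-- `w` is a Lyndon word: nonempty and strictly smaller than all nontrivial rotations. -/
def IsLyndon (w : List ℕ) : Prop :=
  w ≠ [] ∧ ∀ i : ℕ, 0 < i → i < w.length → w < w.rotate i

/-- `w` is a prenecklace over the alphabet `{0,…,k-1}`. -/
def IsPrenecklace (k : ℕ) (w : List ℕ) : Prop :=
  ∃ v : List ℕ, w <+: v ∧ (∀ a ∈ v, a < k) ∧ IsNecklace v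

/-- Length of the longest prefix of `w` that is a Lyndon word. -/
noncomputable def lyn (w : List ℕ) : ℕ :=
  sSup {p | p ≤ w.length ∧ IsLyndon (w.take p)}

/-- Number of binary necklaces of length `n` and density `d`. -/
noncomputable def N (n d : ℕ) : ℕ :=
  {w : List ℕ | w.length = n ∧ (∀ a ∈ w, a < 2) ∧ w.count 1 = d ∧ IsNecklace w}.ncard

/-- Number of binary Lyndon words of length `n` and density `d`. -/
noncomputable def L (n d : ℕ) : ℕ :=
  {w : List ℕ | w.length = n ∧ (∀ a ∈ w, a < 2) ∧ w.count 1 = d ∧ IsLyndon w}.ncard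

/-- Number of necklaces over `{0,…,k-1}` with content `c`. -/
noncomputable def Nk (k : ℕ) (c : Fin k → ℕ) : ℕ :=
  {w : List ℕ | (∀ a ∈ w, a < k) ∧ (∀ i : Fin k, w.count i.val = c i) ∧ IsNecklace w}.ncard

/-- Number of Lyndon words over `{0,…,k-1}` with content `c`. -/
noncomputable def Lk (k : ℕ) (c : Fin k → ℕ) : ℕ :=
  {w : List ℕ | (∀ a ∈ w, a < k) ∧ (∀ i : Fin k, w.count i.val = c i) ∧ IsLyndon w}.ncard

open Finset Function

namespace List

variable {α : Type*}

theorem iterate_rotate_one (w : List α) (k : ℕ) : (·.rotate 1)^[k] w = w.rotate k := by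
  induction k with
  | zero => simp
  | succ k ih => rw [iterate_succ_apply', ih, rotate_rotate]

noncomputable def rotationPeriod (w : List α) : ℕ := minimalPeriod (·.rotate 1) w

theorem rotate_eq_self_iff_rotationPeriod_dvd {w : List α} {k : ℕ} :
    w.rotate k = w ↔ w.rotationPeriod ∣ k := by
  rw [← iterate_rotate_one]
  exact isPeriodicPt_iff_minimalPeriod_dvd

theorem rotationPeriod_dvd_length (w : List α) : w.rotationPeriod ∣ w.length :=
  rotate_eq_self_iff_rotationPeriod_dvd.1 w.rotate_length

theorem rotationPeriod_pos (w : List α) : 0 < w.rotationPeriod := by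
  rcases eq_or_ne w [] with rfl | hw
  · exact IsPeriodicPt.minimalPeriod_pos one_pos rfl
  · exact Nat.pos_of_dvd_of_pos w.rotationPeriod_dvd_length (length_pos_iff.2 hw)

theorem rotationPeriod_le_length {w : List α} (hw : w ≠ []) : w.rotationPeriod ≤ w.length :=
  Nat.le_of_dvd (length_pos_iff.2 hw) w.rotationPeriod_dvd_length

theorem rotationPeriod_rotate (w : List α) (k : ℕ) :
    (w.rotate k).rotationPeriod = w.rotationPeriod := by
  rw [← iterate_rotate_one]
  exact minimalPeriod_apply_iterate (minimalPeriod_pos_iff_mem_periodicPts.1 w.rotationPeriod_pos) k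

theorem IsRotated.rotationPeriod_eq {w v : List α} (h : w ~r v) :
    w.rotationPeriod = v.rotationPeriod := by
  obtain ⟨k, rfl⟩ := h
  exact (rotationPeriod_rotate w k).symm

theorem length_flatten_replicate (u : List α) (k : ℕ) :
    (replicate k u).flatten.length = k * u.length := by
  simp

theorem getElem_flatten_replicate (u : List α) (k i : ℕ)
    (hi : i < (replicate k u).flatten.length) :
    (replicate k u).flatten[i] =
      u[i % u.length]'(Nat.mod_lt _ (by
        rw [length_flatten_replicate] at hi
        exact Nat.pos_of_mul_pos_left (Nat.zero_lt_of_lt hi))) := by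
  induction k generalizing i with
  | zero => simp at hi
  | succ k ih =>
    simp only [replicate_succ, flatten_cons, getElem_append]
    split_ifs with h
    · simp only [Nat.mod_eq_of_lt h]
    · rw [ih]; congr 1; exact (Nat.mod_eq_sub_mod (not_lt.1 h)).symm

theorem rotate_flatten_replicate (u : List α) (k q : ℕ) :
    (replicate k u).flatten.rotate q = (replicate k (u.rotate q)).flatten := by
  apply ext_getElem (by simp)
  intro i hi _
  simp only [getElem_rotate, getElem_flatten_replicate, length_flatten_replicate, length_rotate]
  congr 1
  rw [Nat.mod_mod_of_dvd _ (dvd_mul_left _ _), Nat.mod_add_mod]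

theorem take_length_flatten_replicate (u : List α) {k : ℕ} (hk : k ≠ 0) :
    (replicate k u).flatten.take u.length = u := by
  obtain ⟨k, rfl⟩ := Nat.exists_eq_succ_of_ne_zero hk
  simp [replicate_succ]

theorem count_flatten_replicate [BEq α] (u : List α) (k : ℕ) (a : α) :
    (replicate k u).flatten.count a = k * u.count a := by
  simp [count_flatten]

theorem count_ofFn [DecidableEq α] {n : ℕ} (f : Fin n → α) (a : α) :
    (ofFn f).count a = #{i | f i = a} := by
  rw [← Multiset.coe_count, ← Fin.univ_val_map, Multiset.count_map, ← Finset.filter_val]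
  simp only [eq_comm]
  rfl

theorem rotationPeriod_flatten_replicate (u : List α) {k : ℕ} (hk : k ≠ 0) :
    (replicate k u).flatten.rotationPeriod = u.rotationPeriod := by
  rw [rotationPeriod, rotationPeriod, minimalPeriod_eq_minimalPeriod_iff]
  intro q
  simp only [IsPeriodicPt, IsFixedPt, iterate_rotate_one, rotate_flatten_replicate]
  refine ⟨fun h => ?_, fun h => by rw [h]⟩
  have := congrArg (take u.length) h
  rwa [← length_rotate u q, take_length_flatten_replicate _ hk, length_rotate,
    take_length_flatten_replicate _ hk] at this

theorem flatten_replicate_take_rotationPeriod (w : List α) :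
    (replicate (w.length / w.rotationPeriod) (w.take w.rotationPeriod)).flatten = w := by
  rcases eq_or_ne w [] with rfl | hw
  · simp
  set p := w.rotationPeriod
  have hp : p ≤ w.length := rotationPeriod_le_length hw
  have hdvd : p ∣ w.length := rotationPeriod_dvd_length w
  apply ext_getElem
  · simp [hp, Nat.div_mul_cancel hdvd]
  · intro i _ hi
    have hrot : w.rotate (p * (i / p)) = w :=
      rotate_eq_self_iff_rotationPeriod_dvd.2 (dvd_mul_right _ _)
    have := getElem_rotate w (p * (i / p)) (i % p)
      (by rw [length_rotate]; exact (Nat.mod_lt _ (rotationPeriod_pos w)).trans_le hp)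
    simp only [hrot, Nat.mod_add_div, Nat.mod_eq_of_lt hi] at this
    simp [getElem_flatten_replicate, hp, this]

def IsPrimitive (w : List α) : Prop := w.rotationPeriod = w.length

theorem IsPrimitive.ne_nil {w : List α} (h : w.IsPrimitive) : w ≠ [] := by
  rintro rfl
  exact (rotationPeriod_pos []).ne' h

theorem IsRotated.isPrimitive_iff {w v : List α} (h : w ~r v) : w.IsPrimitive ↔ v.IsPrimitive := by
  rw [IsPrimitive, IsPrimitive, h.rotationPeriod_eq, h.perm.length_eq]

theorem isPrimitive_take_rotationPeriod {w : List α} (hw : w ≠ []) :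
    (w.take w.rotationPeriod).IsPrimitive := by
  have hp := rotationPeriod_le_length hw
  have hk : w.length / w.rotationPeriod ≠ 0 := (Nat.div_pos hp (rotationPeriod_pos w)).ne'
  have := rotationPeriod_flatten_replicate (w.take w.rotationPeriod) hk
  rw [flatten_replicate_take_rotationPeriod] at this
  rw [IsPrimitive, ← this, length_take, min_eq_left hp]

theorem IsPrimitive.rotate_inj {u : List α} (hu : u.IsPrimitive) {i j : ℕ} (hi : i < u.length)
    (hj : j < u.length) (h : u.rotate i = u.rotate j) : i = j := by
  rw [← hu] at hi hj
  rw [← iterate_rotate_one, ← iterate_rotate_one] at h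
  exact (iterate_eq_iterate_iff_of_lt_minimalPeriod hi hj).1 h

end List

theorem isLyndon_iff_isPrimitive_and_isNecklace {w : List ℕ} :
    IsLyndon w ↔ w.IsPrimitive ∧ IsNecklace w := by
  constructor
  · rintro ⟨hw, hlt⟩
    refine ⟨?_, fun i => ?_⟩
    · by_contra hne
      have := hlt _ (List.rotationPeriod_pos w)
        ((List.rotationPeriod_le_length hw).lt_of_ne hne)
      rw [List.rotate_eq_self_iff_rotationPeriod_dvd.2 dvd_rfl] at this
      exact lt_irrefl _ this
    · rw [← List.rotate_mod]
      rcases Nat.eq_zero_or_pos (i % w.length) with h0 | h0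
      · rw [h0, List.rotate_zero]
      · exact (hlt _ h0 (Nat.mod_lt _ (List.length_pos_iff.2 hw))).le
  · rintro ⟨hprim, hneck⟩
    refine ⟨hprim.ne_nil, fun i hi0 hi => (hneck i).lt_of_ne fun h => ?_⟩
    have := List.rotate_eq_self_iff_rotationPeriod_dvd.1 h.symm
    rw [hprim] at this
    exact absurd (Nat.le_of_dvd hi0 this) (not_le.2 hi)

theorem IsNecklace.eq_of_isRotated {u v : List ℕ} (hu : IsNecklace u) (hv : IsNecklace v)
    (h : u ~r v) : u = v := by
  obtain ⟨k, rfl⟩ := h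
  obtain ⟨k', hk'⟩ := List.IsRotated.forall u k
  exact le_antisymm (hu k) (by simpa only [hk'] using hv k')

theorem exists_isNecklace_isRotated (w : List ℕ) : ∃ u, IsNecklace u ∧ u ~r w := by
  have hne : w.cyclicPermutations.toFinset.Nonempty :=
    ⟨w, List.mem_toFinset.2 (List.mem_cyclicPermutations_iff.2 (List.IsRotated.refl w))⟩
  have hmin := Finset.min'_mem _ hne
  rw [List.mem_toFinset, List.mem_cyclicPermutations_iff] at hmin
  refine ⟨_, fun i => Finset.min'_le _ _ ?_, hmin⟩
  rw [List.mem_toFinset, List.mem_cyclicPermutations_iff]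
  exact (List.IsRotated.forall _ i).trans hmin

def indicatorWord {n : ℕ} (s : Finset (Fin n)) : List ℕ :=
  List.ofFn fun i => if i ∈ s then 1 else 0

theorem indicatorWord_injective (n : ℕ) : Function.Injective (indicatorWord (n := n)) := by
  intro s t h
  ext i
  have := congrFun (List.ofFn_injective h) i
  split_ifs at this <;> simp_all

def binaryWords (n d : ℕ) : Finset (List ℕ) :=
  (powersetCard d (univ : Finset (Fin n))).image indicatorWord

theorem card_binaryWords (n d : ℕ) : #(binaryWords n d) = n.choose d := by
  rw [binaryWords, card_image_of_injective _ (indicatorWord_injective n), card_powersetCard,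
    card_univ, Fintype.card_fin]

theorem mem_binaryWords {n d : ℕ} {w : List ℕ} :
    w ∈ binaryWords n d ↔ w.length = n ∧ (∀ a ∈ w, a < 2) ∧ w.count 1 = d := by
  constructor
  · intro hw
    obtain ⟨s, hs, rfl⟩ := mem_image.1 hw
    refine ⟨List.length_ofFn, ?_, ?_⟩
    · simp only [indicatorWord, List.mem_ofFn]
      rintro a ⟨i, rfl⟩
      split_ifs <;> omega
    · rw [indicatorWord, List.count_ofFn, ← (mem_powersetCard.1 hs).2]
      congr 1
      ext i
      simp
  · rintro ⟨rfl, hw, rfl⟩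
    have hbit : ∀ i : Fin w.length, (if w[(i : ℕ)] = 1 then 1 else 0) = w[(i : ℕ)] := fun i => by
      have := hw _ (List.getElem_mem i.2)
      split_ifs <;> omega
    refine mem_image.2 ⟨({i | w[(i : ℕ)] = 1} : Finset (Fin w.length)),
      mem_powersetCard.2 ⟨subset_univ _, ?_⟩, ?_⟩
    · conv_rhs => rw [← List.ofFn_getElem (xs := w)]
      rw [List.count_ofFn]
    · conv_rhs => rw [← List.ofFn_getElem (xs := w)]
      simp only [indicatorWord, mem_filter, mem_univ, true_and, hbit]

theorem rotate_mem_binaryWords {n d : ℕ} {w : List ℕ} (hw : w ∈ binaryWords n d) (k : ℕ) :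
    w.rotate k ∈ binaryWords n d := by
  rw [mem_binaryWords] at hw ⊢
  have hperm := w.rotate_perm k
  exact ⟨by rw [List.length_rotate, hw.1], fun a ha => hw.2.1 a (hperm.mem_iff.1 ha),
    by rw [hperm.count_eq, hw.2.2]⟩

theorem flatten_replicate_mem_binaryWords_iff {k m e : ℕ} (hk : k ≠ 0) {u : List ℕ} :
    (List.replicate k u).flatten ∈ binaryWords (k * m) (k * e) ↔ u ∈ binaryWords m e := by
  have hmem : ∀ a, a ∈ (List.replicate k u).flatten ↔ a ∈ u := fun a => by
    simp [List.mem_flatten, List.mem_replicate, hk]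
  simp only [mem_binaryWords, List.length_flatten_replicate, List.count_flatten_replicate, hmem,
    Nat.mul_right_inj hk]

open scoped Classical in
theorem card_filter_isPrimitive_eq_mul_card_filter_isLyndon {s : Finset (List ℕ)} {n : ℕ}
    (hlen : ∀ w ∈ s, w.length = n) (hrot : ∀ w ∈ s, ∀ k, w.rotate k ∈ s) :
    #{w ∈ s | w.IsPrimitive} = n * #{w ∈ s | IsLyndon w} := by
  rw [← card_range n, ← card_product]
  symm
  refine card_bij (fun p _ => p.2.rotate p.1) ?_ ?_ ?_
  · rintro ⟨i, u⟩ hp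
    simp only [mem_product, mem_range, mem_filter, isLyndon_iff_isPrimitive_and_isNecklace] at hp ⊢
    obtain ⟨-, hus, hprim, -⟩ := hp
    exact ⟨hrot u hus i, ((List.IsRotated.forall u i).isPrimitive_iff).2 hprim⟩
  · rintro ⟨i, u⟩ hp ⟨j, v⟩ hq (h : u.rotate i = v.rotate j)
    simp only [mem_product, mem_range, mem_filter, isLyndon_iff_isPrimitive_and_isNecklace] at hp hq
    obtain ⟨hi, hus, hprim, hneck⟩ := hp
    obtain rfl : u = v := hneck.eq_of_isRotated hq.2.2.2
      ((List.IsRotated.forall u i).symm.trans (h ▸ List.IsRotated.forall v j))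
    rw [← hlen u hus] at hi hq
    rw [hprim.rotate_inj hi hq.1 h]
  · intro w hw
    rw [mem_filter] at hw
    obtain ⟨u, hneck, hu⟩ := exists_isNecklace_isRotated w
    obtain ⟨k, rfl⟩ := hu
    obtain ⟨k', hk'⟩ := List.IsRotated.forall u k
    have hus : u ∈ s := hk' ▸ hrot _ hw.1 k'
    refine ⟨(k % n, u), ?_, ?_⟩
    · simp only [mem_product, mem_range, mem_filter, isLyndon_iff_isPrimitive_and_isNecklace]
      have hprim : u.IsPrimitive := ((List.IsRotated.forall u k).isPrimitive_iff).1 hw.2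
      have hn : 0 < n := hlen u hus ▸ List.length_pos_iff.2 hprim.ne_nil
      exact ⟨Nat.mod_lt _ hn, hus, hprim, hneck⟩
    · rw [← hlen u hus, List.rotate_mod]

theorem take_rotationPeriod_mem_binaryWords {n d : ℕ} (hn : n ≠ 0) {w : List ℕ}
    (hw : w ∈ binaryWords n d) :
    n / w.rotationPeriod ∣ d ∧
      w.take w.rotationPeriod ∈
        binaryWords (n / (n / w.rotationPeriod)) (d / (n / w.rotationPeriod)) := by
  set p := w.rotationPeriod
  set r := w.take p
  have hlen : w.length = n := (mem_binaryWords.1 hw).1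
  have hpn : p ∣ n := hlen ▸ w.rotationPeriod_dvd_length
  have hk : n / p ≠ 0 := (Nat.div_pos (Nat.le_of_dvd (Nat.pos_of_ne_zero hn) hpn)
    w.rotationPeriod_pos).ne'
  have hwr : (List.replicate (n / p) r).flatten = w :=
    hlen ▸ w.flatten_replicate_take_rotationPeriod
  have hd : d = n / p * r.count 1 := by
    rw [← (mem_binaryWords.1 hw).2.2, ← hwr, List.count_flatten_replicate]
  refine ⟨⟨_, hd⟩, ?_⟩
  rw [Nat.div_div_self hpn hn, hd, Nat.mul_div_cancel_left _ (Nat.pos_of_ne_zero hk),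
    ← flatten_replicate_mem_binaryWords_iff hk, Nat.div_mul_cancel hpn, hwr, ← hd]
  exact hw

open scoped Classical in
theorem card_binaryWords_eq_sum_card_filter_isPrimitive {n : ℕ} (hn : n ≠ 0) (d : ℕ) :
    #(binaryWords n d) =
      ∑ j ∈ (n.gcd d).divisors, #{u ∈ binaryWords (n / j) (d / j) | u.IsPrimitive} := by
  rw [← card_sigma]
  symm
  refine card_nbij' (fun p => (List.replicate p.1 p.2).flatten)
    (fun w => ⟨n / w.rotationPeriod, w.take w.rotationPeriod⟩) ?_ ?_ ?_ ?_
  · rintro ⟨j, u⟩ hp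
    simp only [coe_sigma, Set.mem_sigma_iff, mem_coe, Nat.mem_divisors, mem_filter] at hp
    obtain ⟨⟨hj, -⟩, hu, -⟩ := hp
    have hj0 : j ≠ 0 := by rintro rfl; simp_all
    rw [mem_coe, ← Nat.mul_div_cancel' (hj.trans (n.gcd_dvd_left d)),
      ← Nat.mul_div_cancel' (hj.trans (n.gcd_dvd_right d))]
    exact (flatten_replicate_mem_binaryWords_iff hj0).2 hu
  · intro w hw
    have hwne : w ≠ [] := by
      rintro rfl
      exact hn (mem_binaryWords.1 hw).1.symm
    obtain ⟨hkd, hr⟩ := take_rotationPeriod_mem_binaryWords hn hw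
    have hpn : w.rotationPeriod ∣ n := (mem_binaryWords.1 hw).1 ▸ w.rotationPeriod_dvd_length
    simp only [coe_sigma, Set.mem_sigma_iff, mem_coe, Nat.mem_divisors, mem_filter]
    exact ⟨⟨Nat.dvd_gcd (Nat.div_dvd_of_dvd hpn) hkd, Nat.gcd_ne_zero_left hn⟩, hr,
      List.isPrimitive_take_rotationPeriod hwne⟩
  · rintro ⟨j, u⟩ hp
    simp only [coe_sigma, Set.mem_sigma_iff, mem_coe, Nat.mem_divisors, mem_filter] at hp
    obtain ⟨⟨hj, -⟩, hu, hprim⟩ := hp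
    have hj0 : j ≠ 0 := by rintro rfl; simp_all
    have hjn : j ∣ n := hj.trans (n.gcd_dvd_left d)
    have hper : (List.replicate j u).flatten.rotationPeriod = n / j := by
      rw [List.rotationPeriod_flatten_replicate _ hj0, hprim, (mem_binaryWords.1 hu).1]
    dsimp only
    rw [hper, Nat.div_div_self hjn hn, ← (mem_binaryWords.1 hu).1,
      List.take_length_flatten_replicate _ hj0]
  · intro w hw
    rw [mem_coe, mem_binaryWords] at hw
    simp only [← hw.1, List.flatten_replicate_take_rotationPeriod]

open scoped Classical in
theorem sum_divisors_card_filter_isPrimitive {a b : ℕ} (hab : a.Coprime b) (ha : a ≠ 0) {e : ℕ}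
    (he : e ≠ 0) :
    ∑ i ∈ e.divisors, #{u ∈ binaryWords (a * i) (b * i) | u.IsPrimitive} =
      (a * e).choose (b * e) := by
  rw [← card_binaryWords, card_binaryWords_eq_sum_card_filter_isPrimitive (mul_ne_zero ha he),
    Nat.gcd_mul_right, hab.gcd_eq_one, one_mul, ← Nat.sum_div_divisors]
  refine sum_congr rfl fun j hj => ?_
  rw [Nat.mul_div_assoc _ (Nat.dvd_of_mem_divisors hj),
    Nat.mul_div_assoc _ (Nat.dvd_of_mem_divisors hj)]

open scoped Classical in
theorem L_eq_card_filter_isLyndon (n d : ℕ) : L n d = #{w ∈ binaryWords n d | IsLyndon w} := by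
  rw [L, ← Set.ncard_coe_finset]
  congr 1
  ext w
  simp [mem_binaryWords, and_assoc]

open ArithmeticFunction in
theorem lyndon_count_formula_general (n d : ℕ) (hn : 1 ≤ n) :
    (n : ℤ) * L n d =
      ∑ j ∈ (Nat.gcd n d).divisors, moebius j * (Nat.choose (n / j) (d / j) : ℤ) := by
  classical
  obtain ⟨a, b, hab, hna, hdb⟩ := Nat.exists_coprime n d
  set g := n.gcd d
  have hg : 0 < g := Nat.gcd_pos_of_pos_left d hn
  have ha : a ≠ 0 := by rintro rfl; omega
  have inversion := (sum_eq_iff_sum_mul_moebius_eq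
    (f := fun i => (#{u ∈ binaryWords (a * i) (b * i) | u.IsPrimitive} : ℤ))
    (g := fun e => ((a * e).choose (b * e) : ℤ))).1
    (fun e he => by exact_mod_cast sum_divisors_card_filter_isPrimitive hab ha he.ne') g hg
  calc (n : ℤ) * L n d = #{w ∈ binaryWords (a * g) (b * g) | w.IsPrimitive} := by
        rw [L_eq_card_filter_isLyndon, ← Nat.cast_mul,
          ← card_filter_isPrimitive_eq_mul_card_filter_isLyndon (s := binaryWords n d)
            (fun w hw => (mem_binaryWords.1 hw).1) (fun w hw => rotate_mem_binaryWords hw),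
          ← hna, ← hdb]
    _ = ∑ x ∈ g.divisorsAntidiagonal, (moebius x.1 : ℤ) * ((a * x.2).choose (b * x.2) : ℤ) :=
        inversion.symm
    _ = _ := by
        rw [Nat.sum_divisorsAntidiagonal fun i k => (moebius i : ℤ) * ((a * k).choose (b * k) : ℤ)]
        refine sum_congr rfl fun j hj => ?_
        rw [hna, hdb, Nat.mul_div_assoc _ (Nat.dvd_of_mem_divisors hj),
          Nat.mul_div_assoc _ (Nat.dvd_of_mem_divisors hj)]

open ArithmeticFunction in
/-- Enumeration formula for binary Lyndon words with fixed density. -/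
theorem lyndon_count_formula (n d : ℕ) (hn : 1 ≤ n) (hd : d ≤ n) :
    (n : ℤ) * L n d =
      ∑ j ∈ (Nat.gcd n d).divisors, moebius j * (Nat.choose (n / j) (d / j) : ℤ) :=
  lyndon_count_formula_general n d hn
end

section
/- Let n ≥ 2, k ≥ 2, let w = a_1⋯a_{n−1} be a prenecklace over {0,…,k−1} with p = lyn(w), and let b ∈ {0,…,k−1} with a_{n−p} ≤ b. Then lyn(wb) = p if b = a_{n−p}, and lyn(wb) = n if a_{n−p} < b. -/
/-!
Write `p = lyn w` and `x = w.take p`. A Lyndon word is strictly smaller than each of its proper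
suffixes, so it has no proper period; hence a word of period `p` whose prefix of length `p` is
Lyndon has `lyn` equal to `p`. If `v` has period `p` and `v.take p` is Lyndon, every suffix of `v`
is at least the prefix of `v` of the same length; and whenever `u ++ [a]` has this property and
`a < c`, the word `u ++ [c]` is Lyndon (Duval's extension argument). Prenecklaces have the property
too, inherited from the necklace they extend. Extending `x` letter by letter along `w` then shows
that `w` has period `p`: the next letter can be neither smaller than the predicted one (property
of prenecklaces) nor larger (that would give a Lyndon prefix longer than `p`). So
`w ++ [a_{n-p}]` has period `p`, giving `lyn = p`, while `w ++ [b]` with `b > a_{n-p}` is Lyndon.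
-/

namespace List

variable {α : Type*} [LinearOrder α]

theorem append_lt_append_of_lt_of_not_isPrefix {u v : List α} (h : u < v) (hp : ¬u <+: v)
    (r r' : List α) : u ++ r < v ++ r' := by
  induction u generalizing v with
  | nil => exact absurd nil_prefix hp
  | cons a u ih =>
    cases v with
    | nil => cases h
    | cons b v =>
      rcases cons_lt_cons_iff.1 h with hab | ⟨rfl, huv⟩
      · exact cons_lt_cons_iff.2 (Or.inl hab)
      · exact cons_lt_cons_iff.2 (Or.inr ⟨rfl, ih huv (by simpa using hp)⟩)

theorem append_lt_append_of_lt_of_length_le {u v : List α} (h : u < v)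
    (hl : v.length ≤ u.length) (r r' : List α) : u ++ r < v ++ r' :=
  append_lt_append_of_lt_of_not_isPrefix h
    (fun hp => h.ne (hp.eq_of_length_le hl)) r r'

theorem lt_of_append_lt_append_left {s u v : List α} (h : s ++ u < s ++ v) : u < v := by
  induction s with
  | nil => exact h
  | cons a s ih => exact ih (by simpa [cons_lt_cons_iff] using h)

theorem take_le_take_of_lt {u v : List α} (h : u < v) (k : ℕ) : u.take k ≤ v.take k := by
  induction h generalizing k with
  | nil => cases k <;> simp [le_of_lt (α := List α) (nil_lt_cons _ _)]
  | cons _ ih =>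
    cases k with
    | zero => simp
    | succ k => exact cons_le_cons _ (ih k)
  | rel hab =>
    cases k with
    | zero => simp
    | succ k => exact le_of_lt (Lex.rel hab)

theorem take_le_take_of_le {u v : List α} (h : u ≤ v) (k : ℕ) : u.take k ≤ v.take k := by
  rcases h.lt_or_eq with h | rfl
  · exact take_le_take_of_lt h k
  · exact le_rfl

theorem lt_of_take_lt {u v : List α} (h : u.take v.length < v) : u < v := by
  rcases le_or_gt v.length u.length with hl | hl
  · simpa using append_lt_append_of_lt_of_length_le h (by simp [hl]) (u.drop v.length) []
  · rwa [take_of_length_le hl.le] at h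

end List

open List

theorem IsLyndon.lt_drop {x : List ℕ} (hx : IsLyndon x) {m : ℕ} (hm0 : 0 < m)
    (hm : m < x.length) : x < x.drop m := by
  have hrot : x < x.drop m ++ x.take m := by
    simpa [rotate_eq_drop_append_take hm.le] using hx.2 m hm0 hm
  by_contra hle
  rcases (not_lt.1 hle).lt_or_eq with hlt | heq
  · by_cases hpre : x.drop m <+: x
    -- `x = s ++ u` with `s = x.drop m`; the rotation `u ++ s` is then smaller than
    -- `x = x.take m ++ s`.
    · obtain ⟨u, hu⟩ := hpre
      have hut : u < x.take m := lt_of_append_lt_append_left (by rwa [hu])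
      have hlen : u.length = m := by
        have := congrArg length hu
        simp only [length_append, length_drop] at this
        omega
      have hsmall : u ++ x.drop m < x := by
        simpa using append_lt_append_of_lt_of_length_le hut (by grind) (x.drop m) (x.drop m)
      have hbig : x < u ++ x.drop m := by
        have hrot' : x.rotate (x.drop m).length = u ++ x.drop m :=
          calc x.rotate (x.drop m).length = (x.drop m ++ u).rotate (x.drop m).length := by rw [hu]
            _ = u ++ x.drop m := rotate_append_length_eq _ _
        exact hrot' ▸ hx.2 (x.drop m).length (by grind) (by grind)
      exact lt_asymm hbig hsmall
    · exact lt_asymm hrot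
        (by simpa using append_lt_append_of_lt_of_not_isPrefix hlt hpre (x.take m) [])
  · have := congrArg length heq
    simp only [length_drop] at this
    omega

theorem isLyndon_of_lt_drop {x : List ℕ} (hne : x ≠ [])
    (h : ∀ m, 0 < m → m < x.length → x < x.drop m) : IsLyndon x :=
  ⟨hne, fun m hm0 hm => by
    simpa [rotate_eq_drop_append_take hm.le] using
      append_lt_append_of_lt_of_length_le (h m hm0 hm) (by simp) [] (x.take m)⟩

theorem pos_of_isLyndon_take {w : List ℕ} {p : ℕ} (h : IsLyndon (w.take p)) : 0 < p :=
  lt_of_lt_of_le (length_pos_iff.2 h.1) (by simp)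

-- `z.drop p <+: z` encodes that `p` is a period of `z`: `z[i + p] = z[i]` whenever both exist.
section Period

variable {α : Type*}

theorem drop_isPrefix_take {z : List α} {p : ℕ} (h : z.drop p <+: z) (q : ℕ) :
    (z.take q).drop p <+: z.take q :=
  prefix_take_iff.2 ⟨drop_take ▸ (take_prefix _ _).trans h, by simp⟩

theorem drop_append_getD_isPrefix {y : List α} {p : ℕ} (d : α) (h : y.drop p <+: y)
    (hp : 0 < p) (hpy : p ≤ y.length) :
    (y ++ [y.getD (y.length - p) d]).drop p <+: y ++ [y.getD (y.length - p) d] := by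
  rw [drop_append_of_le_length hpy]
  refine IsPrefix.trans ?_ (prefix_append _ _)
  rw [prefix_iff_eq_take.1 h]
  have hi : y.length - p < y.length := by omega
  rw [getD_eq_getElem _ _ hi, length_drop, take_append_getElem hi]
  exact take_prefix _ _

end Period

section PrefixLeSuffixes

variable {α : Type*} [LinearOrder α]

def PrefixLeSuffixes (w : List α) : Prop :=
  ∀ j, w.take (w.drop j).length ≤ w.drop j

theorem PrefixLeSuffixes.of_isPrefix {u w : List α}
    (hw : PrefixLeSuffixes w) (h : u <+: w) : PrefixLeSuffixes u := by
  obtain ⟨t, rfl⟩ := h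
  intro j
  have hj : (u.drop j).length ≤ u.length := by simp
  simpa [take_take, hj, drop_append, take_append_of_le_length] using
    take_le_take_of_le (hw j) (u.drop j).length

theorem PrefixLeSuffixes.le_of_drop_isPrefix {y : List α} {p : ℕ} {a c : α}
    (hc : PrefixLeSuffixes (y ++ [c])) (ha : (y ++ [a]).drop p <+: y ++ [a])
    (hp : 0 < p) (hpy : p ≤ y.length) : a ≤ c := by
  have hlen : ∀ d : α, ((y ++ [d]).drop p).length = y.length - p + 1 := by grind
  have hle : y.drop p ++ [a] ≤ y.drop p ++ [c] :=
    calc y.drop p ++ [a] = (y ++ [a]).take ((y ++ [a]).drop p).length := by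
          rw [← prefix_iff_eq_take.1 ha, drop_append_of_le_length hpy]
      _ = (y ++ [c]).take ((y ++ [c]).drop p).length := by
          rw [hlen, hlen, take_append_of_le_length (by omega), take_append_of_le_length (by omega)]
      _ ≤ (y ++ [c]).drop p := hc p
      _ = y.drop p ++ [c] := drop_append_of_le_length hpy
  by_contra! hca
  exact not_lt.2 hle (append_left_lt (by simpa [cons_lt_cons_iff] using hca))

end PrefixLeSuffixes

theorem IsNecklace.prefixLeSuffixes {v : List ℕ} (hv : IsNecklace v) : PrefixLeSuffixes v := by
  intro j
  rcases le_or_gt v.length j with hj | hj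
  · simp [drop_eq_nil_of_le hj]
  · simpa [rotate_eq_drop_append_take hj.le, take_left] using
      take_le_take_of_le (hv j) (v.drop j).length

theorem IsPrenecklace.prefixLeSuffixes {k : ℕ} {w : List ℕ} (hw : IsPrenecklace k w) :
    PrefixLeSuffixes w :=
  let ⟨_, hwv, _, hv⟩ := hw
  hv.prefixLeSuffixes.of_isPrefix hwv

theorem prefixLeSuffixes_of_drop_isPrefix {v : List ℕ} {p : ℕ} (hper : v.drop p <+: v)
    (hx : IsLyndon (v.take p)) : PrefixLeSuffixes v := by
  have hp : 0 < p := pos_of_isLyndon_take hx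
  intro j
  induction j using Nat.strong_induction_on with
  | _ j ih =>
  rcases Nat.lt_or_ge j p with hjp | hjp
  · rcases Nat.eq_zero_or_pos j with rfl | hj0
    · simp
    rcases le_or_gt v.length j with hvj | hvj
    · simp [drop_eq_nil_of_le hvj]
    have hlt : v < v.drop j := by
      have hjx : j ≤ (v.take p).length := by grind
      have := append_lt_append_of_lt_of_length_le
        (hx.lt_drop hj0 (by grind)) (by simp) (v.drop p) (v.drop p)
      rwa [← drop_append_of_le_length hjx, take_append_drop] at this
    simpa only [take_length] using take_le_take_of_le hlt.le (v.drop j).length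
  · have hs : v.drop j <+: v.drop (j - p) := by
      simpa only [drop_drop, Nat.add_sub_cancel' hjp] using hper.drop (j - p)
    have hlen : (v.drop j).length ≤ (v.drop (j - p)).length := hs.length_le
    have := take_le_take_of_le (ih (j - p) (by omega)) (v.drop j).length
    rwa [take_take, min_eq_left hlen, ← prefix_iff_eq_take.1 hs] at this

theorem isLyndon_append_singleton {u : List ℕ} {a c : ℕ}
    (hu : PrefixLeSuffixes (u ++ [a])) (hac : a < c) : IsLyndon (u ++ [c]) := by
  refine isLyndon_of_lt_drop (by simp) fun j hj0 hj => ?_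
  have hju : j ≤ u.length := by grind
  have hk : (u.drop j).length + 1 ≤ u.length := by grind
  have hlen : ∀ d : ℕ, ((u ++ [d]).drop j).length = (u.drop j).length + 1 := by grind
  apply lt_of_take_lt
  calc (u ++ [c]).take ((u ++ [c]).drop j).length
      = (u ++ [a]).take ((u ++ [a]).drop j).length := by
        rw [hlen, hlen, take_append_of_le_length hk, take_append_of_le_length hk]
    _ ≤ (u ++ [a]).drop j := hu j
    _ = u.drop j ++ [a] := drop_append_of_le_length hju
    _ < u.drop j ++ [c] := append_left_lt (by simpa [cons_lt_cons_iff] using hac)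
    _ = (u ++ [c]).drop j := (drop_append_of_le_length hju).symm

theorem le_lyn {w : List ℕ} {q : ℕ} (hq : q ≤ w.length) (h : IsLyndon (w.take q)) :
    q ≤ lyn w :=
  le_csSup ⟨w.length, fun _ hp => hp.1⟩ ⟨hq, h⟩

theorem lyn_mem {w : List ℕ} (hw : w ≠ []) :
    lyn w ∈ {p | p ≤ w.length ∧ IsLyndon (w.take p)} :=
  Nat.sSup_mem ⟨1, length_pos_iff.2 hw,
    isLyndon_of_lt_drop (by simpa using hw) fun m hm0 hm => by grind⟩
    ⟨w.length, fun _ hp => hp.1⟩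

theorem lyn_eq_length {z : List ℕ} (hz : IsLyndon z) : lyn z = z.length :=
  le_antisymm (lyn_mem hz.1).1 (le_lyn le_rfl (by simpa using hz))

theorem lyn_eq_of_drop_isPrefix {z : List ℕ} {p : ℕ} (hper : z.drop p <+: z)
    (hpz : p ≤ z.length) (hx : IsLyndon (z.take p)) : lyn z = p := by
  have hne : z ≠ [] := by rintro rfl; exact hx.1 (by simp)
  obtain ⟨hlz, hy⟩ := lyn_mem hne
  refine le_antisymm (not_lt.1 fun hlt => ?_) (le_lyn hpz hx)
  exact (drop_isPrefix_take hper (lyn z)).le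
    (hy.lt_drop (pos_of_isLyndon_take hx) (by grind))

theorem IsPrenecklace.drop_lyn_isPrefix {k : ℕ} {w : List ℕ} (hw : IsPrenecklace k w) :
    w.drop (lyn w) <+: w := by
  rcases eq_or_ne w [] with rfl | hne
  · simp
  have hx := (lyn_mem hne).2
  have hp := pos_of_isLyndon_take hx
  suffices ∀ q, (w.take q).drop (lyn w) <+: w.take q by simpa using this w.length
  intro q
  induction q with
  | zero => simp
  | succ q ih =>
    rcases le_or_gt w.length q with hwq | hqw
    · rw [take_of_length_le (show w.length ≤ q + 1 by omega)]
      rwa [take_of_length_le hwq] at ih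
    rcases lt_or_ge q (lyn w) with hqp | hpq
    · rw [drop_eq_nil_of_le (by grind)]
      exact nil_prefix
    set y := w.take q with hy
    have hyl : y.length = q := by grind
    have hext := drop_append_getD_isPrefix 0 ih hp (by omega)
    have htake : w.take (q + 1) = y ++ [w[q]] := (take_append_getElem hqw).symm
    have hxy : (y ++ [y.getD (y.length - lyn w) 0]).take (lyn w) = w.take (lyn w) := by
      rw [take_append_of_le_length (by omega), hy, take_take, min_eq_left hpq]
    -- The next letter is not below the one the period predicts, and not above it either:
    -- otherwise `w.take (q + 1)` would be a Lyndon prefix longer than `lyn w`.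
    have hpre : PrefixLeSuffixes (y ++ [w[q]]) :=
      hw.prefixLeSuffixes.of_isPrefix (htake ▸ take_prefix (q + 1) w)
    have hle := hpre.le_of_drop_isPrefix hext hp (by omega)
    rcases hle.lt_or_eq with hlt | heq
    · have := le_lyn (by omega) (htake ▸ isLyndon_append_singleton
        (prefixLeSuffixes_of_drop_isPrefix hext (hxy ▸ hx)) hlt)
      omega
    · rwa [htake, ← heq]

theorem lyn_extension_general (n k : ℕ) (hn : 2 ≤ n) (w : List ℕ)
    (hw : IsPrenecklace k w) (hlen : w.length = n - 1) (p : ℕ) (hp : p = lyn w)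
    (b : ℕ) :
    (b = w.getD (n - p - 1) 0 → lyn (w ++ [b]) = p) ∧
    (w.getD (n - p - 1) 0 < b → lyn (w ++ [b]) = n) := by
  subst hp
  have hne : w ≠ [] := by rintro rfl; grind
  obtain ⟨hpw, hx⟩ := lyn_mem hne
  rw [show n - lyn w - 1 = w.length - lyn w by omega]
  have hper := drop_append_getD_isPrefix 0 hw.drop_lyn_isPrefix (pos_of_isLyndon_take hx) hpw
  have hxa : (w ++ [w.getD (w.length - lyn w) 0]).take (lyn w) = w.take (lyn w) :=
    take_append_of_le_length hpw
  refine ⟨fun hba => ?_, fun hab => ?_⟩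
  · rw [hba]
    exact lyn_eq_of_drop_isPrefix hper (by grind) (hxa ▸ hx)
  · rw [lyn_eq_length (isLyndon_append_singleton
      (prefixLeSuffixes_of_drop_isPrefix hper (hxa ▸ hx)) hab)]
    grind

/-- Fundamental theorem of necklaces: value of `lyn` after extension. -/
theorem lyn_extension (n k : ℕ) (hn : 2 ≤ n) (hk : 2 ≤ k) (w : List ℕ)
    (hw : IsPrenecklace k w) (hlen : w.length = n - 1) (p : ℕ) (hp : p = lyn w)
    (b : ℕ) (hb : b < k) (hab : w.getD (n - p - 1) 0 ≤ b) :
    (b = w.getD (n - p - 1) 0 → lyn (w ++ [b]) = p) ∧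
    (w.getD (n - p - 1) 0 < b → lyn (w ++ [b]) = n) :=
  lyn_extension_general n k hn w hw hlen p hp b
end
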